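/- Let f be a strategy-proof and non-bossy allocation mechanism over a basic categorized domain with p ≥ 2 and assume f is Pareto optimal. For any profile P and distinct agents j1, j2, letting a = f^{j1}(P) and b = f^{j2}(P), there does not exist a bundle c with c_i ∈ {a_i, b_i} for every category i such that c is strictly preferred to a under R_{j1} and c is strictly preferred to b under R_{j2}. -/

import Mathlib

/-!
Let `a`, `b` be the bundles of `j1`, `j2` and let `c'` be the complement of `c` (in each category
the item of `a`, `b` that `c` does not use), so that `(c', c)` is a trade between the two agents.
Let both agents report `c` first, their own bundle second and `c'` third; by Maskin monotonicity
the allocation does not change. If one agent now swaps her own bundle and `c'` in her report, she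
must receive `c'`: otherwise the allocation stays put and the trade `(c', c)` Pareto-improves it.
If afterwards the other agent makes the same swap, she does not hold her own bundle any more (it
shares an item with `c'`), so strategy-proofness in both directions keeps her bundle and
non-bossiness the whole allocation. Performing the two swaps in either order, both agents receive
`c'` in the same profile, which is impossible.
-/

/-- A bundle in a basic categorized domain: one item (from `Fin n`) per category (`Fin p`). -/
abbrev Bundle (n p : ℕ) := Fin p → Fin n

/-- A preference: a binary relation on bundles (`R a b` means `a` is strictly preferred to `b`). -/
abbrev Pref (n p : ℕ) := Bundle n p → Bundle n p → Prop

/-- A profile assigns a preference to each of the `n` agents. -/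
abbrev Profile (n p : ℕ) := Fin n → Pref n p

/-- An allocation mechanism: maps a profile to the bundle of each agent. -/
abbrev Mechanism (n p : ℕ) := Profile n p → Fin n → Bundle n p

/-- All preferences in the profile are strict linear orders. -/
def ValidProfile {n p : ℕ} (P : Profile n p) : Prop :=
  ∀ j, IsStrictTotalOrder (Bundle n p) (P j)

/-- A valid allocation: in every category, no item is given to two agents. -/
def ValidAlloc {n p : ℕ} (A : Fin n → Bundle n p) : Prop :=
  ∀ i : Fin p, Function.Injective fun j => A j i

/-- Strategy-proofness: no agent can get a strictly better bundle by misreporting. -/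
def StrategyProof {n p : ℕ} (f : Mechanism n p) : Prop :=
  ∀ P : Profile n p, ValidProfile P → ∀ j : Fin n, ∀ R' : Pref n p,
    IsStrictTotalOrder (Bundle n p) R' →
    f P j = f (Function.update P j R') j ∨ P j (f P j) (f (Function.update P j R') j)

/-- Non-bossiness: an agent cannot change others' bundles without changing her own. -/
def NonBossy {n p : ℕ} (f : Mechanism n p) : Prop :=
  ∀ P : Profile n p, ValidProfile P → ∀ j : Fin n, ∀ R' : Pref n p,
    IsStrictTotalOrder (Bundle n p) R' →
    f P j = f (Function.update P j R') j → f P = f (Function.update P j R')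

/-- Relabel a bundle by permuting the items of category `i` by `M`. -/
def relabel {n p : ℕ} (i : Fin p) (M : Fin n ≃ Fin n) (d : Bundle n p) : Bundle n p :=
  Function.update d i (M (d i))

/-- The preference induced on relabeled bundles. -/
def permPref {n p : ℕ} (i : Fin p) (M : Fin n ≃ Fin n) (R : Pref n p) : Pref n p :=
  fun a b => R (relabel i M.symm a) (relabel i M.symm b)

/-- Category-wise neutrality: permuting the items of one category permutes the allocation. -/
def CatNeutral {n p : ℕ} (f : Mechanism n p) : Prop :=
  ∀ P : Profile n p, ValidProfile P → ∀ (i : Fin p) (M : Fin n ≃ Fin n) (j : Fin n),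
    f (fun j' => permPref i M (P j')) j = relabel i M (f P j)

/-- Pareto optimality of a mechanism. -/
def ParetoOptimal {n p : ℕ} (f : Mechanism n p) : Prop :=
  ∀ P : Profile n p, ValidProfile P →
    ¬ ∃ A : Fin n → Bundle n p, ValidAlloc A ∧
      (∀ j, A j = f P j ∨ P j (A j) (f P j)) ∧ (∃ j, P j (A j) (f P j))

/-- `R'` is a pushup of `d` from `R`: relative order of other bundles unchanged,
and the set of bundles above `d` only shrinks. -/
def Pushup {n p : ℕ} (d : Bundle n p) (R R' : Pref n p) : Prop :=
  (∀ a b, a ≠ d → b ≠ d → (R' a b ↔ R a b)) ∧ (∀ a, R' a d → R a d)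

/-- `A` is the serial-dictatorship allocation for profile `P` and agent order `K`
(`K t` is the agent acting at step `t`): each dictator's bundle avoids earlier dictators'
items and is preferred to every other bundle avoiding earlier dictators' items. -/
def IsSDAlloc {n p : ℕ} (P : Profile n p) (K : Fin n ≃ Fin n) (A : Fin n → Bundle n p) : Prop :=
  ∀ t : Fin n,
    (∀ s : Fin n, s < t → ∀ i, A (K s) i ≠ A (K t) i) ∧
    (∀ b : Bundle n p, (∀ s : Fin n, s < t → ∀ i, A (K s) i ≠ b i) →
      b ≠ A (K t) → P (K t) (A (K t)) b)

/-- `f` is a serial dictatorship. -/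
def SerialDict {n p : ℕ} (f : Mechanism n p) : Prop :=
  ∃ K : Fin n ≃ Fin n, ∀ P : Profile n p, ValidProfile P → IsSDAlloc P K (f P)

open Function

section Promote

variable {α : Type*}

def promote (x : α) (r : α → α → Prop) : α → α → Prop :=
  fun u v => v ≠ x ∧ (u = x ∨ r u v)

instance (x : α) (r : α → α → Prop) [IsStrictTotalOrder α r] :
    IsStrictTotalOrder α (promote x r) where
  irrefl u h := h.2.elim h.1 (irrefl u)
  trans _ _ _ huv hvw :=
    ⟨hvw.1, huv.2.imp_right fun h => _root_.trans h (hvw.2.resolve_left huv.1)⟩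
  trichotomous u v huv hvu := by
    by_cases hu : u = x <;> by_cases hv : v = x
    · exact hu.trans hv.symm
    · exact absurd ⟨hv, .inl hu⟩ huv
    · exact absurd ⟨hu, .inl hv⟩ hvu
    · exact trichotomous_of r u v |>.resolve_left (fun h => huv ⟨hv, .inr h⟩)
        |>.resolve_right (fun h => hvu ⟨hu, .inr h⟩)

lemma not_promote_self {x u : α} {r : α → α → Prop} : ¬ promote x r u x := fun h => h.1 rfl

lemma promote_cross {x u v : α} {r s : α → α → Prop} (h : promote x r u v)
    (h' : promote x s v u) : r u v ∧ s v u :=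
  ⟨h.2.resolve_left h'.1, h'.2.resolve_left h.1⟩

lemma eq_of_promote_promote_cross {y z u v : α} {r : α → α → Prop} [Std.Asymm r]
    (h : promote y (promote z r) u v) (h' : promote z (promote y r) v u) : u = y := by
  by_contra hu
  have hv : v ≠ z := fun hv => not_promote_self (hv ▸ h.2.resolve_left hu)
  exact asymm ((h.2.resolve_left hu).2.resolve_left h'.1)
    ((h'.2.resolve_left hv).2.resolve_left h.1)

-- `WellOrderingRel` only serves as some strict total order on the remaining elements.
def topThree (x y z : α) : α → α → Prop :=
  promote x (promote y (promote z WellOrderingRel))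

instance (x y z : α) : IsStrictTotalOrder α (topThree x y z) :=
  inferInstanceAs (IsStrictTotalOrder α (promote x _))

variable {x y z u v : α}

lemma topThree_fst_snd (hyx : y ≠ x) : topThree x y z x y := ⟨hyx, .inl rfl⟩

lemma topThree_snd_thd (hzx : z ≠ x) (hzy : z ≠ y) : topThree x y z y z :=
  ⟨hzx, .inr ⟨hzy, .inl rfl⟩⟩

lemma topThree.not_fst : ¬ topThree x y z u x := not_promote_self

lemma topThree.eq_fst_of_snd (h : topThree x y z u y) : u = x :=
  h.2.resolve_right not_promote_self

lemma topThree.eq_fst_or_snd_of_thd (h : topThree x y z u z) : u = x ∨ u = y :=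
  h.2.imp_right fun h => h.2.resolve_right not_promote_self

lemma topThree.eq_snd_of_swap (h : topThree x y z u v) (h' : topThree x z y v u) : u = y :=
  eq_of_promote_promote_cross (promote_cross h h').1 (promote_cross h h').2

end Promote

lemma Sym2.eq_snd_of_ne {α : Type*} {x y z w : α} (h : s(x, y) = s(z, w)) (hy : y ≠ w) :
    x = w :=
  (Sym2.eq_iff.1 h).elim (fun h => absurd h.2 hy) And.left

lemma exists_sym2_partner {ι α : Type*} {a b c : ι → α}
    (hc : ∀ i, c i = a i ∨ c i = b i) :
    ∃ c' : ι → α, ∀ i, s(c' i, c i) = s(a i, b i) := by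
  classical
  refine ⟨fun i => if c i = a i then b i else a i, fun i => ?_⟩
  dsimp only
  split_ifs with h
  · rw [h, Sym2.eq_swap]
  · rw [(hc i).resolve_left h]

section Mechanism

variable {n p : ℕ} {f : Mechanism n p} {Q : Profile n p} {j j' : Fin n} {R : Pref n p}

lemma ValidProfile.update (hQ : ValidProfile Q) (j : Fin n) (R : Pref n p)
    [IsStrictTotalOrder (Bundle n p) R] : ValidProfile (update Q j R) := by
  intro k
  rcases eq_or_ne k j with rfl | hk
  · rw [update_self]; infer_instance
  · rw [update_of_ne hk]; exact hQ k

lemma ValidAlloc.update_trade {A : Fin n → Bundle n p} (hA : ValidAlloc A) (hne : j ≠ j')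
    {d d' : Bundle n p} (hd : ∀ i, s(d i, d' i) = s(A j i, A j' i)) :
    ValidAlloc (update (update A j d) j' d') := by
  intro i
  rcases Sym2.eq_iff.1 (hd i) with ⟨h, h'⟩ | ⟨h, h'⟩
  · convert hA i using 1
    funext k
    rcases eq_or_ne k j' with rfl | hk'
    · simp [h']
    rcases eq_or_ne k j with rfl | hk
    · simp [hk', h]
    · simp [hk, hk']
  · convert (hA i).comp (Equiv.swap j j').injective using 1
    funext k
    rcases eq_or_ne k j' with rfl | hk'
    · simp [h']
    rcases eq_or_ne k j with rfl | hk
    · simp [hk', h]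
    · simp [hk, hk', Equiv.swap_apply_of_ne_of_ne]

lemma ParetoOptimal.not_trade (hPO : ParetoOptimal f)
    (hfA : ∀ P : Profile n p, ValidProfile P → ValidAlloc (f P)) (hQ : ValidProfile Q)
    (hne : j ≠ j') {d d' : Bundle n p} (hd : ∀ i, s(d i, d' i) = s(f Q j i, f Q j' i))
    (hj : ¬ Q j (f Q j) d) (hj' : Q j' d' (f Q j')) : False := by
  have := hQ j
  have hj : d = f Q j ∨ Q j d (f Q j) :=
    (trichotomous_of (Q j) d (f Q j)).elim .inr fun h => h.elim .inl (absurd · hj)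
  refine hPO Q hQ ⟨update (update (f Q) j d) j' d', (hfA Q hQ).update_trade hne hd,
    fun k => ?_, j', by simpa using hj'⟩
  rcases eq_or_ne k j' with rfl | hk'
  · simp [hj']
  rcases eq_or_ne k j with rfl | hk
  · simpa [hk'] using hj
  · simp [hk, hk']

lemma StrategyProof.apply_update_eq_or (hSP : StrategyProof f) (hQ : ValidProfile Q)
    (hR : IsStrictTotalOrder (Bundle n p) R) :
    f (update Q j R) j = f Q j ∨ R (f (update Q j R) j) (f Q j) := by
  simpa using hSP (update Q j R) (hQ.update j R) j (Q j) (hQ j)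

-- Maskin monotonicity
lemma update_eq_of_forall_better (hSP : StrategyProof f) (hNB : NonBossy f)
    (hQ : ValidProfile Q) (hR : IsStrictTotalOrder (Bundle n p) R)
    (hbetter : ∀ u, R u (f Q j) → Q j u (f Q j)) : f (update Q j R) = f Q := by
  have := hQ j
  have hj : f (update Q j R) j = f Q j := by
    refine (hSP.apply_update_eq_or hQ hR).resolve_right fun h => ?_
    rcases hSP Q hQ j R hR with h' | h'
    · exact absurd h'.symm (ne_of_irrefl h)
    · exact asymm (hbetter _ h) h'
  exact (hNB Q hQ j R hR hj.symm).symm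

lemma update_topThree_eq (hSP : StrategyProof f) (hNB : NonBossy f) (hQ : ValidProfile Q)
    {x y z : Bundle n p} (hy : f Q j = y) (hx : Q j x y) :
    f (update Q j (topThree x y z)) = f Q :=
  update_eq_of_forall_better hSP hNB hQ inferInstance fun _ hu => by
    subst hy
    rwa [hu.eq_fst_of_snd]

lemma apply_update_topThree_swap (hSP : StrategyProof f) (hQ : ValidProfile Q)
    {x y z : Bundle n p} (hQj : Q j = topThree x y z) (hy : f Q j = y) :
    f (update Q j (topThree x z y)) j = y ∨ f (update Q j (topThree x z y)) j = z := by
  rcases hSP.apply_update_eq_or (R := topThree x z y) hQ inferInstance with h | h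
  · exact .inl (h.trans hy)
  rw [hy] at h
  rcases h.eq_fst_or_snd_of_thd with hx | hz
  · rcases hSP Q hQ j (topThree x z y) inferInstance with h' | h'
    · exact .inl (h'.symm.trans hy)
    · rw [hQj, hy, hx] at h'
      exact absurd h' topThree.not_fst
  · exact .inr hz

lemma update_topThree_swap_eq (hSP : StrategyProof f) (hNB : NonBossy f) (hQ : ValidProfile Q)
    {x y z : Bundle n p} (hQj : Q j = topThree x y z) (hy : f Q j ≠ y) :
    f (update Q j (topThree x z y)) = f Q := by
  have hj : f (update Q j (topThree x z y)) j = f Q j := by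
    refine (hSP.apply_update_eq_or (R := topThree x z y) hQ inferInstance).resolve_right
      fun h => ?_
    rcases hSP Q hQ j (topThree x z y) inferInstance with h' | h'
    · exact absurd h'.symm (ne_of_irrefl h)
    · rw [hQj] at h'
      exact hy (h'.eq_snd_of_swap h)
  exact (hNB Q hQ j _ inferInstance hj.symm).symm

lemma apply_update_topThree_swap_of_trade (hSP : StrategyProof f) (hNB : NonBossy f)
    (hPO : ParetoOptimal f) (hfA : ∀ P : Profile n p, ValidProfile P → ValidAlloc (f P))
    (hQ : ValidProfile Q) (hne : j ≠ j') {c c' y : Bundle n p} (hQj : Q j = topThree c y c')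
    (hy : f Q j = y) (hj' : Q j' c (f Q j')) (hd : ∀ i, s(c' i, c i) = s(y i, f Q j' i))
    (hyc : y ≠ c) (hyc' : y ≠ c') : f (update Q j (topThree c c' y)) j = c' := by
  refine (apply_update_topThree_swap hSP hQ hQj hy).resolve_left fun h => ?_
  have hf : f (update Q j (topThree c c' y)) = f Q :=
    (hNB Q hQ j (topThree c c' y) inferInstance (h.trans hy.symm).symm).symm
  refine hPO.not_trade hfA (hQ.update j (topThree c c' y)) hne (d := c') (d' := c)
    ?_ ?_ ?_
  · rw [hf, hy]; exact hd
  · rw [update_self, hf, hy]; exact asymm (topThree_snd_thd hyc hyc')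
  · rw [update_of_ne hne.symm, hf]; exact hj'

lemma apply_update_update_topThree_swap (hSP : StrategyProof f) (hNB : NonBossy f)
    (hPO : ParetoOptimal f) (hfA : ∀ P : Profile n p, ValidProfile P → ValidAlloc (f P))
    (hQ : ValidProfile Q) (hne : j ≠ j') {c c' y y' : Bundle n p}
    (hQj : Q j = topThree c y c') (hQj' : Q j' = topThree c y' c') (hy : f Q j = y)
    (hy' : f Q j' = y') (hd : ∀ i, s(c' i, c i) = s(y i, y' i)) (hyc : y ≠ c)
    (hy'c : y' ≠ c) :
    f (update (update Q j (topThree c c' y)) j' (topThree c c' y')) j = c' := by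
  obtain ⟨i, hi⟩ := Function.ne_iff.1 hy'c
  have hc'i : c' i = y' i := Sym2.eq_snd_of_ne (hd i) hi.symm
  have hyc' : y ≠ c' := fun h =>
    hne (hfA Q hQ i (show f Q j i = f Q j' i by rw [hy, hy', h, hc'i]))
  have hQ₁ := hQ.update j (topThree c c' y)
  have h₁ := apply_update_topThree_swap_of_trade hSP hNB hPO hfA hQ hne hQj hy
    (by rw [hQj', hy']; exact topThree_fst_snd hy'c) (hy' ▸ hd) hyc hyc'
  rw [update_topThree_swap_eq hSP hNB hQ₁ (by rw [update_of_ne hne.symm, hQj'])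
    fun h => hne (hfA _ hQ₁ i ?_), h₁]
  show f _ j i = f _ j' i
  rw [h₁, h, hc'i]

end Mechanism

theorem statement4_general (n p : ℕ) (f : Mechanism n p)
    (hfA : ∀ P : Profile n p, ValidProfile P → ValidAlloc (f P))
    (hSP : StrategyProof f) (hNB : NonBossy f) (hPO : ParetoOptimal f)
    (P : Profile n p) (hP : ValidProfile P) (j1 j2 : Fin n) (hne : j1 ≠ j2) :
    ¬ ∃ c : Bundle n p,
      (∀ i : Fin p, c i = f P j1 i ∨ c i = f P j2 i) ∧
      P j1 c (f P j1) ∧ P j2 c (f P j2) := by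
  rintro ⟨c, hc, h1, h2⟩
  have := hP j1
  have := hP j2
  obtain ⟨c', hswap⟩ := exists_sym2_partner hc
  set P₀ := update (update P j1 (topThree c (f P j1) c')) j2 (topThree c (f P j2) c')
  have hP₀ : ValidProfile P₀ := (hP.update j1 _).update j2 _
  have hfP₀ : f P₀ = f P := by
    have h₁ := update_topThree_eq hSP hNB hP (z := c') rfl h1
    rw [← h₁]
    exact update_topThree_eq hSP hNB (hP.update j1 _) (by rw [h₁])
      (by rwa [update_of_ne hne.symm])
  have key₁ := apply_update_update_topThree_swap hSP hNB hPO hfA hP₀ hne (by simp [P₀, hne])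
    (by simp [P₀]) (by rw [hfP₀]) (by rw [hfP₀]) hswap (ne_of_irrefl' h1) (ne_of_irrefl' h2)
  have key₂ := apply_update_update_topThree_swap hSP hNB hPO hfA hP₀ hne.symm (by simp [P₀])
    (by simp [P₀, hne]) (by rw [hfP₀]) (by rw [hfP₀]) (fun i => (hswap i).trans Sym2.eq_swap)
    (ne_of_irrefl' h2) (ne_of_irrefl' h1)
  rw [update_comm hne.symm] at key₂
  obtain ⟨i, -⟩ := Function.ne_iff.1 (ne_of_irrefl h1)
  exact hne (hfA _ ((hP₀.update j1 _).update j2 _) i (congrFun (key₁.trans key₂.symm) i))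

theorem statement4 (n p : ℕ) (hp : 2 ≤ p) (f : Mechanism n p)
    (hfA : ∀ P : Profile n p, ValidProfile P → ValidAlloc (f P))
    (hSP : StrategyProof f) (hNB : NonBossy f) (hPO : ParetoOptimal f)
    (P : Profile n p) (hP : ValidProfile P) (j1 j2 : Fin n) (hne : j1 ≠ j2) :
    ¬ ∃ c : Bundle n p,
      (∀ i : Fin p, c i = f P j1 i ∨ c i = f P j2 i) ∧
      P j1 c (f P j1) ∧ P j2 c (f P j2) :=
  statement4_general n p f hfA hSP hNB hPO P hP j1 j2 hne
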